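/- Stokes/Green formula on the half-space (the paper's extended Stokes formula (16) in a flat boundary coordinate patch, degree-0 case): For every continuously differentiable compactly supported f : ℝⁿ → ℝ and continuously differentiable compactly supported vector field v : ℝⁿ → ℝⁿ, one has ∫_{H₊} (⟨∇f(x), v(x)⟩ + f(x)·div v(x)) dx = −∫_{ℝ^{n−1}} f(y,0)·v_n(y,0) dy, where v_n denotes the n-th component of v. -/

import Mathlib

/-! Since `⟪∇f, v⟫ + f div v = div (f • v)`, it suffices to integrate the divergence of a
compactly supported `C¹` field `w` over `H₊`, one partial derivative `∂ᵢwᵢ` at a time, by Fubini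
along the lines parallel to `eᵢ`. A tangential line lies entirely in `H₊` or misses it, and the
integral of `∂ᵢwᵢ` over a whole line vanishes; a normal line meets `H₊` in the ray `t > 0`, over
which `∂ₙwₙ` integrates to `-wₙ(y, 0)`. -/

open MeasureTheory Filter Topology RealInnerProductSpace ENNReal

noncomputable section

/-- The (classical) divergence of a vector field on Euclidean space. -/
def diverg {n : ℕ} (v : EuclideanSpace ℝ (Fin n) → EuclideanSpace ℝ (Fin n))
    (x : EuclideanSpace ℝ (Fin n)) : ℝ :=
  ∑ i, fderiv ℝ v x (EuclideanSpace.single i 1) i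

/-- The open upper half-space `H₊ = {x ∈ ℝⁿ : xₙ > 0}` (with `n = m + 1`). -/
def upperHalfSpace (m : ℕ) : Set (EuclideanSpace ℝ (Fin (m + 1))) :=
  {x | 0 < x (Fin.last m)}

/-- The identification of `ℝ^{n-1}` with the boundary of the half-space, `y ↦ (y, 0)`. -/
def bdryEmb {m : ℕ} (y : EuclideanSpace ℝ (Fin m)) : EuclideanSpace ℝ (Fin (m + 1)) :=
  WithLp.toLp 2 (Fin.snoc y.ofLp 0)

open Set

section Line

variable {E F : Type*} [NormedAddCommGroup E] [NormedSpace ℝ E] [NormedAddCommGroup F] {g : E → F}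

theorem HasCompactSupport.comp_line (hg : HasCompactSupport g) (a : E) {e : E} (he : e ≠ 0) :
    HasCompactSupport fun t : ℝ => g (a + t • e) :=
  hg.comp_isClosedEmbedding ((Homeomorph.addLeft a).isClosedEmbedding.comp
    (isClosedEmbedding_smul_left he))

variable [NormedSpace ℝ F]

theorem deriv_comp_line (hg : Differentiable ℝ g) (a e : E) :
    deriv (fun t : ℝ => g (a + t • e)) = fun t => fderiv ℝ g (a + t • e) e := by
  funext t
  have hline : HasDerivAt (fun t : ℝ => a + t • e) e t := by
    simpa using ((hasDerivAt_id t).smul_const e).const_add a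
  exact ((hg _).hasFDerivAt.comp_hasDerivAt t hline).deriv

theorem integral_fderiv_comp_line_eq_zero (hg : ContDiff ℝ 1 g) (hgs : HasCompactSupport g)
    (a : E) {e : E} (he : e ≠ 0) : ∫ t : ℝ, fderiv ℝ g (a + t • e) e = 0 := by
  have hc : ContDiff ℝ 1 fun t : ℝ => g (a + t • e) := hg.comp (by fun_prop)
  have hcs := hgs.comp_line a he
  rw [← deriv_comp_line (hg.differentiable one_ne_zero)]
  exact integral_eq_zero_of_hasDerivAt_of_integrable
    (fun t => (hc.differentiable one_ne_zero t).hasDerivAt)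
    ((hc.continuous_deriv le_rfl).integrable_of_hasCompactSupport hcs.deriv)
    (hc.continuous.integrable_of_hasCompactSupport hcs)

theorem integral_Ioi_fderiv_comp_line [CompleteSpace F] (hg : ContDiff ℝ 1 g)
    (hgs : HasCompactSupport g) (a : E) {e : E} (he : e ≠ 0) :
    ∫ t in Ioi (0 : ℝ), fderiv ℝ g (a + t • e) e = -g a := by
  have hc : ContDiff ℝ 1 fun t : ℝ => g (a + t • e) := hg.comp (by fun_prop)
  simpa [deriv_comp_line (hg.differentiable one_ne_zero)] using
    HasCompactSupport.integral_Ioi_deriv_eq hc (hgs.comp_line a he) 0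

end Line

theorem HasCompactSupport.integrable_fderiv_apply {E F : Type*} [NormedAddCommGroup E]
    [NormedSpace ℝ E] [MeasurableSpace E] [OpensMeasurableSpace E] [NormedAddCommGroup F]
    [NormedSpace ℝ F] {μ : Measure E} [IsFiniteMeasureOnCompacts μ] {g : E → F}
    (hg : ContDiff ℝ 1 g) (hgs : HasCompactSupport g) (u : E) :
    Integrable (fun x => fderiv ℝ g x u) μ :=
  ((hg.continuous_fderiv one_ne_zero).clm_apply continuous_const).integrable_of_hasCompactSupport
    (hgs.fderiv_apply ℝ u)

namespace EuclideanSpace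

variable {m : ℕ}

def splitCoord (j : Fin (m + 1)) :
    EuclideanSpace ℝ (Fin (m + 1)) ≃ᵐ EuclideanSpace ℝ (Fin m) × ℝ :=
  (MeasurableEquiv.toLp 2 _).symm.trans <|
    (MeasurableEquiv.piFinSuccAbove (fun _ => ℝ) j).trans <|
      MeasurableEquiv.prodComm.trans <|
        MeasurableEquiv.prodCongr (MeasurableEquiv.toLp 2 _) (MeasurableEquiv.refl ℝ)

@[simp]
theorem splitCoord_apply (j : Fin (m + 1)) (x : EuclideanSpace ℝ (Fin (m + 1))) :
    splitCoord j x = (WithLp.toLp 2 fun k => x (j.succAbove k), x j) :=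
  rfl

theorem splitCoord_symm_apply (j : Fin (m + 1)) (y : EuclideanSpace ℝ (Fin m)) (t : ℝ) :
    (splitCoord j).symm (y, t) = WithLp.toLp 2 (j.insertNth t y.ofLp) :=
  rfl

theorem splitCoord_symm_eq_add_smul (j : Fin (m + 1)) (y : EuclideanSpace ℝ (Fin m)) (t : ℝ) :
    (splitCoord j).symm (y, t) = WithLp.toLp 2 (j.insertNth 0 y.ofLp) + t • single j 1 := by
  ext k
  cases k using j.succAboveCases <;> simp [splitCoord_symm_apply]

theorem measurePreserving_splitCoord (j : Fin (m + 1)) :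
    MeasurePreserving (splitCoord j) :=
  ((volume_preserving_symm_measurableEquiv_toLp _).symm _).prod (MeasurePreserving.id volume)
    |>.comp (Measure.measurePreserving_swap.comp (volume_preserving_piFinSuccAbove _ j))
    |>.comp (volume_preserving_symm_measurableEquiv_toLp _)

theorem setIntegral_preimage_splitCoord_prod {F : Type*} [NormedAddCommGroup F]
    [NormedSpace ℝ F] (j : Fin (m + 1)) {φ : EuclideanSpace ℝ (Fin (m + 1)) → F}
    (hφ : Integrable φ) (S : Set (EuclideanSpace ℝ (Fin m))) (T : Set ℝ) :
    ∫ x in splitCoord j ⁻¹' (S ×ˢ T), φ x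
      = ∫ y in S, ∫ t in T, φ ((splitCoord j).symm (y, t)) := by
  have hφ' : Integrable (fun p => φ ((splitCoord j).symm p)) (volume.prod volume) := by
    rw [← Measure.volume_eq_prod]
    exact ((measurePreserving_splitCoord j).symm _).integrable_comp_emb
      (splitCoord j).symm.measurableEmbedding |>.2 hφ
  rw [← setIntegral_prod _ hφ'.integrableOn, ← Measure.volume_eq_prod]
  simpa only [MeasurableEquiv.symm_apply_apply] using
    (measurePreserving_splitCoord j).setIntegral_preimage_emb
    (splitCoord j).measurableEmbedding (fun p => φ ((splitCoord j).symm p)) (S ×ˢ T)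

end EuclideanSpace

section HalfSpace

open EuclideanSpace

variable {m : ℕ} {F : Type*} [NormedAddCommGroup F] [NormedSpace ℝ F]
  {g : EuclideanSpace ℝ (Fin (m + 1)) → F}

theorem integral_upperHalfSpace_fderiv_single_castSucc (hg : ContDiff ℝ 1 g)
    (hgs : HasCompactSupport g) (i : Fin m) :
    ∫ x in upperHalfSpace m, fderiv ℝ g x (single i.castSucc 1) = 0 := by
  obtain ⟨k, hk⟩ : ∃ k, i.castSucc.succAbove k = Fin.last m :=
    Fin.exists_succAbove_eq (Fin.castSucc_lt_last i).ne'
  have hsplit : upperHalfSpace m = splitCoord i.castSucc ⁻¹' ({y | 0 < y k} ×ˢ univ) := by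
    ext x
    simp [upperHalfSpace, hk]
  rw [hsplit, setIntegral_preimage_splitCoord_prod _ (hgs.integrable_fderiv_apply hg _)]
  simp_rw [Measure.restrict_univ, splitCoord_symm_eq_add_smul,
    integral_fderiv_comp_line_eq_zero hg hgs _ (by simp : single i.castSucc (1 : ℝ) ≠ 0),
    integral_zero]

theorem integral_upperHalfSpace_fderiv_single_last [CompleteSpace F] (hg : ContDiff ℝ 1 g)
    (hgs : HasCompactSupport g) :
    ∫ x in upperHalfSpace m, fderiv ℝ g x (single (Fin.last m) 1)
      = -∫ y : EuclideanSpace ℝ (Fin m), g (bdryEmb y) := by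
  have hsplit : upperHalfSpace m = splitCoord (Fin.last m) ⁻¹' (univ ×ˢ Ioi 0) := by
    ext x
    simp [upperHalfSpace]
  rw [hsplit, setIntegral_preimage_splitCoord_prod _ (hgs.integrable_fderiv_apply hg _),
    Measure.restrict_univ, ← integral_neg]
  simp_rw [splitCoord_symm_eq_add_smul,
    integral_Ioi_fderiv_comp_line hg hgs _ (by simp : single (Fin.last m) (1 : ℝ) ≠ 0),
    Fin.insertNth_last', bdryEmb]

end HalfSpace

section Divergence

variable {n : ℕ} {v : EuclideanSpace ℝ (Fin n) → EuclideanSpace ℝ (Fin n)}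
  {x : EuclideanSpace ℝ (Fin n)}

theorem diverg_eq_sum_fderiv_apply (hv : DifferentiableAt ℝ v x) :
    diverg v x = ∑ i, fderiv ℝ (fun y => v y i) x (EuclideanSpace.single i 1) :=
  Finset.sum_congr rfl fun i _ =>
    (DFunLike.congr_fun ((PiLp.hasFDerivAt_apply 2 (v x) i).comp x hv.hasFDerivAt).fderiv _).symm

theorem diverg_smul {f : EuclideanSpace ℝ (Fin n) → ℝ} (hf : DifferentiableAt ℝ f x)
    (hv : DifferentiableAt ℝ v x) :
    diverg (fun y => f y • v y) x = ⟪gradient f x, v x⟫ + f x * diverg v x := by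
  have hfderiv : fderiv ℝ f x (v x) = ∑ i, fderiv ℝ f x (EuclideanSpace.single i 1) * v x i := by
    conv_lhs => rw [← (EuclideanSpace.basisFun (Fin n) ℝ).sum_repr (v x)]
    simp [mul_comm]
  simp [diverg, fderiv_fun_smul hf hv, hfderiv, Finset.sum_add_distrib, Finset.mul_sum, add_comm]

end Divergence

theorem integral_upperHalfSpace_diverg {m : ℕ}
    {w : EuclideanSpace ℝ (Fin (m + 1)) → EuclideanSpace ℝ (Fin (m + 1))}
    (hw : ContDiff ℝ 1 w) (hws : HasCompactSupport w) :
    ∫ x in upperHalfSpace m, diverg w x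
      = -∫ y : EuclideanSpace ℝ (Fin m), w (bdryEmb y) (Fin.last m) := by
  have hwi (i : Fin (m + 1)) : ContDiff ℝ 1 fun x => w x i := (contDiff_piLp 2).1 hw i
  have hwis (i : Fin (m + 1)) : HasCompactSupport fun x => w x i :=
    hws.comp_left (g := fun u : EuclideanSpace ℝ (Fin (m + 1)) => u i) rfl
  simp_rw [diverg_eq_sum_fderiv_apply (hw.differentiable one_ne_zero _)]
  rw [integral_finsetSum _ fun i _ => ((hwis i).integrable_fderiv_apply (hwi i) _).integrableOn,
    Fin.sum_univ_castSucc]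
  simp [integral_upperHalfSpace_fderiv_single_castSucc (hwi _) (hwis _),
    integral_upperHalfSpace_fderiv_single_last (hwi _) (hwis _)]

theorem stokes_green_half_space_general
    (m : ℕ)
    (f : EuclideanSpace ℝ (Fin (m + 1)) → ℝ)
    (v : EuclideanSpace ℝ (Fin (m + 1)) → EuclideanSpace ℝ (Fin (m + 1)))
    (hf : ContDiff ℝ 1 f) (hfsupp : HasCompactSupport f)
    (hv : ContDiff ℝ 1 v) :
    ∫ x in upperHalfSpace m, (⟪gradient f x, v x⟫ + f x * diverg v x)
      = -∫ y : EuclideanSpace ℝ (Fin m), f (bdryEmb y) * v (bdryEmb y) (Fin.last m) := by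
  simp_rw [← diverg_smul (hf.differentiable one_ne_zero _) (hv.differentiable one_ne_zero _)]
  rw [integral_upperHalfSpace_diverg (w := fun x => f x • v x) (hf.smul hv) hfsupp.smul_right]
  simp

/-- **Stokes/Green formula on the half-space** (degree-0 case, flat boundary chart):
for `f : ℝⁿ → ℝ` and `v : ℝⁿ → ℝⁿ` continuously differentiable and compactly supported,
`∫_{H₊} (⟨∇f, v⟩ + f · div v) = −∫_{ℝ^{n−1}} f(y,0) · vₙ(y,0) dy`. -/
theorem stokes_green_half_space
    (m : ℕ)
    (f : EuclideanSpace ℝ (Fin (m + 1)) → ℝ)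
    (v : EuclideanSpace ℝ (Fin (m + 1)) → EuclideanSpace ℝ (Fin (m + 1)))
    (hf : ContDiff ℝ 1 f) (hfsupp : HasCompactSupport f)
    (hv : ContDiff ℝ 1 v) (hvsupp : HasCompactSupport v) :
    ∫ x in upperHalfSpace m, (⟪gradient f x, v x⟫ + f x * diverg v x)
      = -∫ y : EuclideanSpace ℝ (Fin m), f (bdryEmb y) * v (bdryEmb y) (Fin.last m) :=
  stokes_green_half_space_general m f v hf hfsupp hv
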